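/- Let N ≥ 3, let X = (x_1,...,x_N), V = (v_1,...,v_N) ∈ ℝ^N be such that X + t₀V = c𝟙 for some t₀, c ∈ ℝ, and suppose v_i ≠ v_j for all i ≠ j. Then for every t ∈ ℝ and every pair i < j, the ratio ((v_i − v_j)² + (x_i − tv_i − x_j + tv_j)²) / ((v_i − v_j)² + (x_i − x_j)²) is independent of the pair (i, j): it equals ((v_1 − v_2)² + (x_1 − tv_1 − x_2 + tv_2)²) / ((v_1 − v_2)² + (x_1 − x_2)²). -/
import Mathlib


theorem ratio_pair_independent (N : ℕ) (hN : 3 ≤ N)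
    (X V : Fin N → ℝ) (t₀ c : ℝ)
    (hcoll : X + t₀ • V = fun _ => c)
    (hV : ∀ i j, i ≠ j → V i ≠ V j) :
    ∀ (t : ℝ) (i j : Fin N), i ≠ j →
      ((V i - V j) ^ 2 + (X i - t * V i - X j + t * V j) ^ 2) /
          ((V i - V j) ^ 2 + (X i - X j) ^ 2) =
        ((V ⟨0, by omega⟩ - V ⟨1, by omega⟩) ^ 2 +
            (X ⟨0, by omega⟩ - t * V ⟨0, by omega⟩ - X ⟨1, by omega⟩ +
              t * V ⟨1, by omega⟩) ^ 2) /
          ((V ⟨0, by omega⟩ - V ⟨1, by omega⟩) ^ 2 +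
            (X ⟨0, by omega⟩ - X ⟨1, by omega⟩) ^ 2) := by
  have hX : ∀ i, X i = c - t₀ * V i := by
    intro i
    have := congrFun hcoll i
    simp [Pi.add_apply, Pi.smul_apply, smul_eq_mul] at this
    linarith
  have key : ∀ (t : ℝ) (i j : Fin N), i ≠ j →
      ((V i - V j) ^ 2 + (X i - t * V i - X j + t * V j) ^ 2) /
        ((V i - V j) ^ 2 + (X i - X j) ^ 2)
      = (1 + (t₀ + t) ^ 2) / (1 + t₀ ^ 2) := by
    intro t i j hij
    have hd : V i - V j ≠ 0 := sub_ne_zero.mpr (hV i j hij)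
    have hd2 : (V i - V j) ^ 2 ≠ 0 := pow_ne_zero _ hd
    rw [hX i, hX j]
    have e1 : (V i - V j) ^ 2 + (c - t₀ * V i - t * V i - (c - t₀ * V j) + t * V j) ^ 2
        = (V i - V j) ^ 2 * (1 + (t₀ + t) ^ 2) := by ring
    have e2 : (V i - V j) ^ 2 + (c - t₀ * V i - (c - t₀ * V j)) ^ 2
        = (V i - V j) ^ 2 * (1 + t₀ ^ 2) := by ring
    rw [e1, e2, mul_div_mul_left _ _ hd2]
  intro t i j hij
  rw [key t i j hij, key t ⟨0, by omega⟩ ⟨1, by omega⟩ (by simp [Fin.ext_iff])]
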